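/- arXiv:1804.07100 — 6 statements merged into one kernel-verified Lean document; each statement's English description precedes it below -/
import Mathlib

section
/- Let x, y ∈ Mₙ(ℂ) with x skew-symmetric, y symmetric, and assume 1 − y·x and 1 − y·x·y·x are invertible. Then x·(1 − y·x)⁻¹ = x·y·x·(1 − y·x·y·x)⁻¹ + x·(1 − y·x·y·x)⁻¹. Moreover x·y·x·(1 − y·x·y·x)⁻¹ is symmetric and x·(1 − y·x·y·x)⁻¹ is skew-symmetric. -/
open Matrix

theorem quasiInverse_decomposition (n : ℕ) (x y : Matrix (Fin n) (Fin n) ℂ)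
    (hx : xᵀ = -x) (hy : yᵀ = y)
    (h1 : IsUnit (1 - y * x)) (h2 : IsUnit (1 - y * x * y * x)) :
    x * (1 - y * x)⁻¹ =
        x * y * x * (1 - y * x * y * x)⁻¹ + x * (1 - y * x * y * x)⁻¹ ∧
      (x * y * x * (1 - y * x * y * x)⁻¹)ᵀ = x * y * x * (1 - y * x * y * x)⁻¹ ∧
      (x * (1 - y * x * y * x)⁻¹)ᵀ = -(x * (1 - y * x * y * x)⁻¹) := by
  set B := 1 - y * x * y * x with hB
  set A := 1 - x * y * x * y with hA
  have hd1 : IsUnit (1 - y * x).det := (isUnit_iff_isUnit_det _).mp h1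
  have hd2 : IsUnit B.det := (isUnit_iff_isUnit_det _).mp h2
  have hBt : Bᵀ = A := by
    simp [hB, hA, transpose_sub, transpose_mul, hx, hy]
    noncomm_ring
  have hdA : IsUnit A.det := by
    rw [← hBt, det_transpose]; exact hd2
  have hBB : B * B⁻¹ = 1 := mul_nonsing_inv _ hd2
  have hBB' : B⁻¹ * B = 1 := nonsing_inv_mul _ hd2
  have hAA : A⁻¹ * A = 1 := nonsing_inv_mul _ hdA
  -- intertwining: A * x = x * B
  have hint : A * x = x * B := by rw [hA, hB]; noncomm_ring
  have hxB : x * B⁻¹ = A⁻¹ * x := by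
    calc x * B⁻¹ = A⁻¹ * (A * x * B⁻¹) := by rw [← mul_assoc, ← mul_assoc, hAA, one_mul]
      _ = A⁻¹ * (x * (B * B⁻¹)) := by rw [hint, mul_assoc]
      _ = A⁻¹ * x := by rw [hBB, mul_one]
  -- intertwining for xyx
  have hint2 : A * (x * y * x) = x * y * x * B := by rw [hA, hB]; noncomm_ring
  have hxyxB : x * y * x * B⁻¹ = A⁻¹ * (x * y * x) := by
    calc x * y * x * B⁻¹ = A⁻¹ * (A * (x * y * x) * B⁻¹) := by
          rw [← mul_assoc, ← mul_assoc, hAA, one_mul]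
      _ = A⁻¹ * (x * y * x * (B * B⁻¹)) := by rw [hint2, mul_assoc]
      _ = A⁻¹ * (x * y * x) := by rw [hBB, mul_one]
  have hBinvT : (B⁻¹)ᵀ = A⁻¹ := by
    rw [transpose_nonsing_inv, hBt]
  refine ⟨?_, ?_, ?_⟩
  · -- x * (1-yx)⁻¹ = (xyx + x) * B⁻¹
    have key : (1 - y * x) * ((1 + y * x) * B⁻¹) = 1 := by
      have : (1 - y * x) * (1 + y * x) = B := by rw [hB]; noncomm_ring
      rw [← mul_assoc, this, hBB]
    have h3 : (1 - y * x)⁻¹ = (1 + y * x) * B⁻¹ := by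
      have := inv_eq_right_inv key
      rw [this]
    rw [h3]
    noncomm_ring
  · rw [transpose_mul, hBinvT, transpose_mul, transpose_mul, hx, hy, hxyxB]
    noncomm_ring
  · rw [transpose_mul, hBinvT, hx, hxB]
    noncomm_ring
end

section
/- Let x ∈ M₃(ℂ) with det(x) ≠ 0, let v ∈ ℂ³ be a column vector, set M := adj(x)·(v·vᵀ) ∈ M₃(ℂ) and s := vᵀ·adj(x)·v ∈ ℂ, and assume s ≠ 1. Then 1 − M is invertible and (1 − s)⁻¹ · x · (1 − M) = det(x)⁻¹ · adj( (1 − M)⁻¹ · adj(x) ). -/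
open Matrix

theorem quasiInverse_su33 (x : Matrix (Fin 3) (Fin 3) ℂ) (hx : x.det ≠ 0) (v : Fin 3 → ℂ)
    (hs : v ⬝ᵥ x.adjugate.mulVec v ≠ 1) :
    IsUnit (1 - x.adjugate * vecMulVec v v) ∧
      (1 - v ⬝ᵥ x.adjugate.mulVec v)⁻¹ • (x * (1 - x.adjugate * vecMulVec v v)) =
        x.det⁻¹ • ((1 - x.adjugate * vecMulVec v v)⁻¹ * x.adjugate).adjugate := by
  set s := v ⬝ᵥ x.adjugate.mulVec v with hs_def
  set N := 1 - x.adjugate * vecMulVec v v with hN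
  have hdetN : N.det = 1 - s := by
    have h1 : x.adjugate * vecMulVec v v =
        replicateCol (Fin 1) (x.adjugate *ᵥ v) * replicateRow (Fin 1) v := by
      rw [vecMulVec_eq (Fin 1), replicateCol_mulVec, Matrix.mul_assoc]; rfl
    have h2 : N = 1 + replicateCol (Fin 1) (-(x.adjugate *ᵥ v)) * replicateRow (Fin 1) v := by
      rw [hN, h1]
      rw [sub_eq_add_neg]
      congr 1
      ext i j
      simp [Matrix.mul_apply, replicateCol, replicateRow]
    rw [h2]; erw [det_one_add_replicateCol_mul_replicateRow]
    simp [hs_def, sub_eq_add_neg]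
  have hdet : N.det ≠ 0 := by
    rw [hdetN]
    intro h
    exact hs (by linear_combination -h)
  have hU : IsUnit N := by
    rw [Matrix.isUnit_iff_isUnit_det]
    exact hdet.isUnit
  refine ⟨hU, ?_⟩
  have hadjN : (N⁻¹).adjugate = (N.det)⁻¹ • N := by
    have := Matrix.inv_def (N⁻¹)
    rw [Matrix.nonsing_inv_nonsing_inv _ hdet.isUnit, Matrix.det_nonsing_inv] at this
    have hdi : Ring.inverse (Ring.inverse N.det) = N.det := by
      simp [Ring.inverse_eq_inv]
    rw [hdi] at this
    calc (N⁻¹).adjugate = (N.det)⁻¹ • ((N.det) • (N⁻¹).adjugate) := by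
          rw [smul_smul, inv_mul_cancel₀ hdet, one_smul]
      _ = (N.det)⁻¹ • N := by
          rw [← this]
  have hadjadj : x.adjugate.adjugate = x.det • x :=
    (Matrix.adjugate_adjugate x (by simp)).trans (by norm_num)
  rw [Matrix.adjugate_mul_distrib, hadjadj, hadjN, hdetN]
  rw [Matrix.mul_smul, Matrix.smul_mul, smul_smul, smul_smul]
  congr 1
  rw [mul_comm x.det⁻¹, mul_assoc, inv_mul_cancel₀ hx, mul_one]
end

section
/- For x, y ∈ ℂⁿ define the bilinear form q(u,v) = Σᵢ uᵢvᵢ, the quadratic form q(u) = q(u,u), the kernel h(u,v) := 1 − 2·q(u, v̄) + q(u)·conj(q(v)) (where v̄ denotes entrywise complex conjugation), and, when h(x,y) ≠ 0, the quasi-inverse x^y := h(x,y)⁻¹·(x − q(x)·ȳ). Then for all x, y, z ∈ ℂⁿ with h(x,y) ≠ 0: h(x,y)·h(x^y, z) = h(x, y+z). -/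
noncomputable section

def qbil {n : ℕ} (u v : Fin n → ℂ) : ℂ := ∑ i, u i * v i

def qform {n : ℕ} (u : Fin n → ℂ) : ℂ := qbil u u

def genNorm {n : ℕ} (u v : Fin n → ℂ) : ℂ :=
  1 - 2 * qbil u (fun i => (starRingEnd ℂ) (v i)) + qform u * (starRingEnd ℂ) (qform v)

def quasiInv {n : ℕ} (u v : Fin n → ℂ) : Fin n → ℂ :=
  (genNorm u v)⁻¹ • (u - qform u • fun i => (starRingEnd ℂ) (v i))

lemma qbil_sub_left {n : ℕ} (u v w : Fin n → ℂ) :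
    qbil (u - v) w = qbil u w - qbil v w := by
  simp [qbil, sub_mul, Finset.sum_sub_distrib]

lemma qbil_smul_left {n : ℕ} (c : ℂ) (u w : Fin n → ℂ) :
    qbil (c • u) w = c * qbil u w := by
  simp [qbil, Finset.mul_sum, mul_assoc]

lemma qbil_comm {n : ℕ} (u v : Fin n → ℂ) : qbil u v = qbil v u := by
  simp [qbil, mul_comm]

lemma qbil_add_left {n : ℕ} (u v w : Fin n → ℂ) :
    qbil (u + v) w = qbil u w + qbil v w := by
  simp [qbil, add_mul, Finset.sum_add_distrib]

lemma qbil_conj {n : ℕ} (u v : Fin n → ℂ) :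
    (starRingEnd ℂ) (qbil u v)
      = qbil (fun i => (starRingEnd ℂ) (u i)) (fun i => (starRingEnd ℂ) (v i)) := by
  simp [qbil, map_sum]

lemma qbil_sub_right {n : ℕ} (u v w : Fin n → ℂ) :
    qbil u (v - w) = qbil u v - qbil u w := by
  rw [qbil_comm, qbil_sub_left, qbil_comm v u, qbil_comm w u]

lemma qbil_add_right {n : ℕ} (u v w : Fin n → ℂ) :
    qbil u (v + w) = qbil u v + qbil u w := by
  rw [qbil_comm, qbil_add_left, qbil_comm v u, qbil_comm w u]

lemma qbil_smul_right {n : ℕ} (c : ℂ) (u w : Fin n → ℂ) :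
    qbil u (c • w) = c * qbil u w := by
  rw [qbil_comm, qbil_smul_left, qbil_comm w u]

lemma qform_sub_smul {n : ℕ} (x : Fin n → ℂ) (c : ℂ) (w : Fin n → ℂ) :
    qform (x - c • w) = qform x - 2 * c * qbil x w + c ^ 2 * qform w := by
  simp only [qform, qbil_sub_left, qbil_sub_right, qbil_smul_left, qbil_smul_right,
    qbil_comm w x]
  ring

lemma qform_smul {n : ℕ} (c : ℂ) (u : Fin n → ℂ) :
    qform (c • u) = c ^ 2 * qform u := by
  simp only [qform, qbil_smul_left, qbil_smul_right]
  ring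

theorem genNorm_cocycle {n : ℕ} (x y z : Fin n → ℂ) (hxy : genNorm x y ≠ 0) :
    genNorm x y * genNorm (quasiInv x y) z = genNorm x (y + z) := by
  set h := genNorm x y with hh
  have hw : qform (x - qform x • fun i => (starRingEnd ℂ) (y i)) = qform x * h := by
    rw [qform_sub_smul, hh, genNorm]
    have : qform (fun i => (starRingEnd ℂ) (y i)) = (starRingEnd ℂ) (qform y) := by
      rw [qform, qform, qbil_conj]
    rw [this]; ring
  have key : genNorm (quasiInv x y) z
      = 1 - 2 * h⁻¹ * (qbil x (fun i => (starRingEnd ℂ) (z i))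
          - qform x * qbil (fun i => (starRingEnd ℂ) (y i)) (fun i => (starRingEnd ℂ) (z i)))
        + h⁻¹ * (qform x * (starRingEnd ℂ) (qform z)) := by
    rw [genNorm, quasiInv, qform_smul, qbil_smul_left, ← hh, hw,
      qbil_sub_left, qbil_smul_left]
    field_simp
  rw [key]
  have hqz : (starRingEnd ℂ) (qform (y + z))
      = (starRingEnd ℂ) (qform y) + 2 * qbil (fun i => (starRingEnd ℂ) (y i)) (fun i => (starRingEnd ℂ) (z i)) + (starRingEnd ℂ) (qform z) := by
    simp only [qform, qbil_conj]
    have : (fun i => (starRingEnd ℂ) ((y + z) i))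
        = (fun i => (starRingEnd ℂ) (y i)) + (fun i => (starRingEnd ℂ) (z i)) := by
      funext i; simp
    rw [this, qbil_add_left, qbil_add_right, qbil_add_right,
      qbil_comm (fun i => (starRingEnd ℂ) (z i)) (fun i => (starRingEnd ℂ) (y i))]
    ring
  have hby : qbil x (fun i => (starRingEnd ℂ) ((y + z) i))
      = qbil x (fun i => (starRingEnd ℂ) (y i)) + qbil x (fun i => (starRingEnd ℂ) (z i)) := by
    have : (fun i => (starRingEnd ℂ) ((y + z) i))
        = (fun i => (starRingEnd ℂ) (y i)) + (fun i => (starRingEnd ℂ) (z i)) := by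
      funext i; simp
    rw [this, qbil_add_right]
  rw [genNorm, hqz, hby]
  rw [hh, genNorm] at hxy ⊢
  field_simp
  ring
end
end

section
/- Let A, Z ∈ M_{p,q}(ℂ) and B ∈ M_{q,p}(ℂ), and suppose 1_q − B·A, 1_p − A·B, and 1_q − B·(A+Z) are invertible. Then 1_q − B·(1_p − A·B)⁻¹·Z is invertible and (A+Z)·(1_q − B·(A+Z))⁻¹ = A·(1_q − B·A)⁻¹ + (1_p − A·B)⁻¹ · Z · (1_q − B·(1_p − A·B)⁻¹·Z)⁻¹ · (1_q − B·A)⁻¹. -/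
open Matrix

theorem quasiInverse_shift (p q : ℕ) (A Z : Matrix (Fin p) (Fin q) ℂ)
    (B : Matrix (Fin q) (Fin p) ℂ)
    (h1 : IsUnit (1 - B * A)) (h2 : IsUnit (1 - A * B)) (h3 : IsUnit (1 - B * (A + Z))) :
    IsUnit (1 - B * (1 - A * B)⁻¹ * Z) ∧
      (A + Z) * (1 - B * (A + Z))⁻¹ =
        A * (1 - B * A)⁻¹ +
          (1 - A * B)⁻¹ * Z * (1 - B * (1 - A * B)⁻¹ * Z)⁻¹ * (1 - B * A)⁻¹ := by
  set u : Matrix (Fin q) (Fin q) ℂ := 1 - B * A with hu_def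
  set v : Matrix (Fin p) (Fin p) ℂ := 1 - A * B with hv_def
  set D : Matrix (Fin q) (Fin q) ℂ := 1 - B * (A + Z) with hD_def
  set C : Matrix (Fin q) (Fin q) ℂ := 1 - B * v⁻¹ * Z with hC_def
  have hud : IsUnit u.det := (isUnit_iff_isUnit_det u).mp h1
  have hvd : IsUnit v.det := (isUnit_iff_isUnit_det v).mp h2
  have hDd : IsUnit D.det := (isUnit_iff_isUnit_det D).mp h3
  have huu : u⁻¹ * u = 1 := nonsing_inv_mul u hud
  have huu' : u * u⁻¹ = 1 := mul_nonsing_inv u hud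
  have hvv : v⁻¹ * v = 1 := nonsing_inv_mul v hvd
  have hvv' : v * v⁻¹ = 1 := mul_nonsing_inv v hvd
  have hDD' : D * D⁻¹ = 1 := mul_nonsing_inv D hDd
  -- intertwining: B * v⁻¹ = u⁻¹ * B
  have hBv : B * v = u * B := by
    rw [hu_def, hv_def, Matrix.mul_sub, Matrix.sub_mul, Matrix.mul_one, Matrix.one_mul,
      Matrix.mul_assoc]
  have hBvi : B * v⁻¹ = u⁻¹ * B := by
    calc B * v⁻¹ = u⁻¹ * (u * B) * v⁻¹ := by rw [← Matrix.mul_assoc, huu, Matrix.one_mul]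
    _ = u⁻¹ * (B * v) * v⁻¹ := by rw [hBv]
    _ = u⁻¹ * B := by rw [Matrix.mul_assoc, Matrix.mul_assoc, hvv', Matrix.mul_one]
  -- C = u⁻¹ * D
  have hsub : D = u - B * Z := by
    rw [hD_def, hu_def, Matrix.mul_add, sub_sub]
  have hC : C = u⁻¹ * D := by
    rw [hC_def, hBvi, Matrix.mul_assoc, hsub, Matrix.mul_sub, huu]
  have hD : D = u * C := by rw [hC, ← Matrix.mul_assoc, huu', Matrix.one_mul]
  -- C is invertible
  have hCd : IsUnit C.det := by
    rw [hC, det_mul, det_nonsing_inv]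
    exact (isUnit_ringInverse.mpr hud).mul hDd
  have hCunit : IsUnit C := (isUnit_iff_isUnit_det C).mpr hCd
  have hCC' : C * C⁻¹ = 1 := mul_nonsing_inv C hCd
  -- D⁻¹ = C⁻¹ * u⁻¹
  have hDi : D⁻¹ = C⁻¹ * u⁻¹ := by
    refine inv_eq_right_inv ?_
    rw [hD, Matrix.mul_assoc, ← Matrix.mul_assoc C, hCC', Matrix.one_mul, huu']
  refine ⟨hCunit, ?_⟩
  have hABv : A * B * v⁻¹ = v⁻¹ * (A * B) := by
    have h : (A * B) * v = v * (A * B) := by rw [hv_def]; noncomm_ring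
    calc A * B * v⁻¹ = v⁻¹ * (v * (A * B)) * v⁻¹ := by
          rw [← Matrix.mul_assoc, hvv, Matrix.one_mul]
    _ = v⁻¹ * ((A * B) * v) * v⁻¹ := by rw [h]
    _ = v⁻¹ * (A * B) := by rw [Matrix.mul_assoc, Matrix.mul_assoc, hvv', Matrix.mul_one]
  have hAC : A * C + v⁻¹ * Z = A + Z := by
    have hACe : A * C = A - v⁻¹ * ((A * B) * Z) := by
      rw [hC_def, Matrix.mul_sub, Matrix.mul_one, ← Matrix.mul_assoc, ← Matrix.mul_assoc,
        hABv, Matrix.mul_assoc]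
    have hZ : v⁻¹ * Z - v⁻¹ * ((A * B) * Z) = Z := by
      rw [← Matrix.mul_sub]
      have : Z - (A * B) * Z = v * Z := by
        rw [hv_def, Matrix.sub_mul, Matrix.one_mul]
      rw [this, ← Matrix.mul_assoc, hvv, Matrix.one_mul]
    rw [hACe]
    calc A - v⁻¹ * ((A * B) * Z) + v⁻¹ * Z
        = A + (v⁻¹ * Z - v⁻¹ * ((A * B) * Z)) := by abel
    _ = A + Z := by rw [hZ]
  have key : (A + Z) * C⁻¹ = A + v⁻¹ * Z * C⁻¹ := by
    calc (A + Z) * C⁻¹ = (A * C + v⁻¹ * Z) * C⁻¹ := by rw [hAC]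
    _ = A * (C * C⁻¹) + v⁻¹ * Z * C⁻¹ := by
          rw [Matrix.add_mul, Matrix.mul_assoc]
    _ = A + v⁻¹ * Z * C⁻¹ := by rw [hCC', Matrix.mul_one]
  rw [hDi, ← Matrix.mul_assoc, key, Matrix.add_mul]
end

section
/- Let x, y ∈ M_{p,q}(ℂ) and consider the linear endomorphism T of M_{p,q}(ℂ) given by T(Z) = (1_p − x·y*)·Z·(1_q − y*·x), where y* denotes the conjugate transpose. Then det(T) = det(1_p − x·y*)^{p+q}. -/
open Matrix

open Kronecker in
lemma bergman_det_aux (p q : ℕ) (A : Matrix (Fin p) (Fin p) ℂ)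
    (B : Matrix (Fin q) (Fin q) ℂ)
    (T : Matrix (Fin p) (Fin q) ℂ →ₗ[ℂ] Matrix (Fin p) (Fin q) ℂ)
    (hT : ∀ Z, T Z = A * Z * B) :
    LinearMap.det T = A.det ^ q * B.det ^ p := by
  classical
  have hToLin : T = Matrix.toLin (Matrix.stdBasis ℂ (Fin p) (Fin q))
      (Matrix.stdBasis ℂ (Fin p) (Fin q)) (A ⊗ₖ Bᵀ) := by
    apply (Matrix.stdBasis ℂ (Fin p) (Fin q)).ext
    rintro ⟨k, l⟩
    rw [Matrix.toLin_self, hT, Matrix.stdBasis_eq_single]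
    ext i j
    simp only [Finset.sum_apply, Matrix.sum_apply, Matrix.smul_apply,
      Matrix.stdBasis_eq_single, Matrix.single, Matrix.mul_apply,
      Matrix.kroneckerMap_apply, Matrix.transpose_apply, Matrix.of_apply, smul_eq_mul,
      mul_ite, mul_one, mul_zero, ite_and]
    rw [Fintype.sum_prod_type]
    simp only [Finset.sum_ite_eq, Finset.mem_univ, if_true]
    simp [Matrix.stdBasis_eq_single, Matrix.single, ite_and, mul_ite]
  rw [hToLin, LinearMap.det_toLin, Matrix.det_kronecker, Matrix.det_transpose]
  simp [Fintype.card_fin]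

theorem bergman_det (p q : ℕ) (x y : Matrix (Fin p) (Fin q) ℂ)
    (T : Matrix (Fin p) (Fin q) ℂ →ₗ[ℂ] Matrix (Fin p) (Fin q) ℂ)
    (hT : ∀ Z, T Z = (1 - x * yᴴ) * Z * (1 - yᴴ * x)) :
    LinearMap.det T = (1 - x * yᴴ).det ^ (p + q) := by
  rw [bergman_det_aux p q _ _ T hT, Matrix.det_one_sub_mul_comm, pow_add]
  ring
end

section
/- Every complex symmetric matrix A ∈ Mₙ(ℂ) (Aᵀ = A) can be written as A = U·D·Uᵀ, where U ∈ Mₙ(ℂ) is unitary and D is a diagonal matrix with nonnegative real entries. -/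
open Matrix

theorem aux_star_mul_self_mul_eq_diagonal {𝕜 : Type*} [RCLike 𝕜] {n : Type*} [Fintype n]
    [DecidableEq n]
    (M : Matrix n n 𝕜) (b : OrthonormalBasis n 𝕜 (EuclideanSpace 𝕜 n)) (d : n → 𝕜)
    (h : ∀ j, M *ᵥ ⇑(b j) = d j • ⇑(b j)) :
    star ((EuclideanSpace.basisFun n 𝕜).toBasis.toMatrix b.toBasis) * M *
      ((EuclideanSpace.basisFun n 𝕜).toBasis.toMatrix b.toBasis) = diagonal d := by
  set U : Matrix n n 𝕜 := (EuclideanSpace.basisFun n 𝕜).toBasis.toMatrix b.toBasis with hUdef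
  have hU : U ∈ Matrix.unitaryGroup n 𝕜 :=
    (EuclideanSpace.basisFun n 𝕜).toMatrix_orthonormalBasis_mem_unitary b
  have hUapp : ∀ i j, U i j = b j i := fun i j => rfl
  have hUmul : ∀ j, U *ᵥ Pi.single j 1 = ⇑(b j) := by
    intro j; simp only [mulVec_single, hUapp, mul_one]
    ext i; simp [hUapp]
  have hstar : ∀ j, star U *ᵥ ⇑(b j) = Pi.single j 1 := by
    intro j
    rw [← hUmul, mulVec_mulVec]
    rw [show star U * U = 1 from mem_unitaryGroup_iff'.mp hU, one_mulVec]
  apply Matrix.toEuclideanLin.injective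
  apply Module.Basis.ext (EuclideanSpace.basisFun n 𝕜).toBasis
  intro i
  simp only [toEuclideanLin_apply, OrthonormalBasis.coe_toBasis, EuclideanSpace.basisFun_apply,
    PiLp.ofLp_single, ← mulVec_mulVec, hUmul, h, mulVec_smul, hstar,
    Matrix.diagonal_mulVec_single, WithLp.toLp_smul, PiLp.toLp_single, mul_one]
  apply PiLp.ext
  intro j
  simp only [PiLp.smul_apply, EuclideanSpace.single_apply, smul_eq_mul, mul_ite, mul_one, mul_zero]

theorem aux_joint_eigenbasis {n : ℕ} (X Y : Matrix (Fin n) (Fin n) ℝ)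
    (hX : X.IsHermitian) (hY : Y.IsHermitian) (hXY : X * Y = Y * X) :
    ∃ (b : OrthonormalBasis (Fin n) ℝ (EuclideanSpace ℝ (Fin n))) (d₁ d₂ : Fin n → ℝ),
      (∀ j, X *ᵥ ⇑(b j) = d₁ j • ⇑(b j)) ∧ (∀ j, Y *ᵥ ⇑(b j) = d₂ j • ⇑(b j)) := by
  classical
  set T₁ := Matrix.toEuclideanLin X with hT₁
  set T₂ := Matrix.toEuclideanLin Y with hT₂
  have hS₁ : T₁.IsSymmetric := isHermitian_iff_isSymmetric.1 hX
  have hS₂ : T₂.IsSymmetric := isHermitian_iff_isSymmetric.1 hY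
  have key : ∀ (P R : Matrix (Fin n) (Fin n) ℝ) (v : EuclideanSpace ℝ (Fin n)),
      Matrix.toEuclideanLin P (Matrix.toEuclideanLin R v) = Matrix.toEuclideanLin (P * R) v := by
    intro P R v
    apply (WithLp.equiv 2 (Fin n → ℝ)).injective
    simp [Matrix.ofLp_toEuclideanLin_apply, mulVec_mulVec]
  have hcomm : Commute T₁ T₂ := by
    unfold Commute SemiconjBy
    ext v
    simp only [Module.End.mul_apply, hT₁, hT₂, key, hXY]
  set V : ℝ × ℝ → Submodule ℝ (EuclideanSpace ℝ (Fin n)) :=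
    fun i => Module.End.eigenspace T₁ i.2 ⊓ Module.End.eigenspace T₂ i.1 with hV
  have hInt : DirectSum.IsInternal V :=
    LinearMap.IsSymmetric.directSum_isInternal_of_commute hS₁ hS₂ hcomm
  have hfin : Set.Finite {i | V i ≠ ⊥} :=
    WellFoundedGT.finite_ne_bot_of_iSupIndep hInt.submodule_iSupIndep
  haveI : Finite {i // V i ≠ ⊥} := hfin.to_subtype
  haveI : Fintype {i // V i ≠ ⊥} := Fintype.ofFinite _
  set W : {i // V i ≠ ⊥} → Submodule ℝ (EuclideanSpace ℝ (Fin n)) := fun i => V i with hW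
  have hInt' : DirectSum.IsInternal W := DirectSum.isInternal_ne_bot_iff.mpr hInt
  have hOrth' : OrthogonalFamily ℝ (fun i => W i) (fun i => (W i).subtypeₗᵢ) :=
    (LinearMap.IsSymmetric.orthogonalFamily_eigenspace_inf_eigenspace hS₁ hS₂).comp
      Subtype.val_injective
  have hn : Module.finrank ℝ (EuclideanSpace ℝ (Fin n)) = n := by
    simp [finrank_euclideanSpace]
  set b := hInt'.subordinateOrthonormalBasis hn hOrth' with hb
  set idx0 := fun j => hInt'.subordinateOrthonormalBasisIndex hn j hOrth' with hidx0
  set idx : Fin n → ℝ × ℝ := fun j => (idx0 j).val with hidx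
  refine ⟨b, fun j => (idx j).2, fun j => (idx j).1, ?_, ?_⟩
  · intro j
    have hm := hInt'.subordinateOrthonormalBasis_subordinate hn j hOrth'
    have h1 : T₁ (b j) = (idx j).2 • b j := Module.End.mem_eigenspace_iff.mp hm.1
    have := congrArg (WithLp.equiv 2 (Fin n → ℝ)) h1
    simpa [hT₁, Matrix.ofLp_toEuclideanLin_apply] using this
  · intro j
    have hm := hInt'.subordinateOrthonormalBasis_subordinate hn j hOrth'
    have h2 : T₂ (b j) = (idx j).1 • b j := Module.End.mem_eigenspace_iff.mp hm.2
    have := congrArg (WithLp.equiv 2 (Fin n → ℝ)) h2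
    simpa [hT₂, Matrix.ofLp_toEuclideanLin_apply] using this

theorem aux_simdiag {n : ℕ} (X Y : Matrix (Fin n) (Fin n) ℝ)
    (hX : X.IsHermitian) (hY : Y.IsHermitian) (hXY : X * Y = Y * X) :
    ∃ O : Matrix (Fin n) (Fin n) ℝ, O ∈ Matrix.unitaryGroup (Fin n) ℝ ∧
      ∃ d₁ d₂ : Fin n → ℝ, star O * X * O = diagonal d₁ ∧ star O * Y * O = diagonal d₂ := by
  obtain ⟨b, d₁, d₂, h₁, h₂⟩ := aux_joint_eigenbasis X Y hX hY hXY
  exact ⟨(EuclideanSpace.basisFun (Fin n) ℝ).toBasis.toMatrix b.toBasis,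
    (EuclideanSpace.basisFun (Fin n) ℝ).toMatrix_orthonormalBasis_mem_unitary b, d₁, d₂,
    aux_star_mul_self_mul_eq_diagonal X b d₁ h₁, aux_star_mul_self_mul_eq_diagonal Y b d₂ h₂⟩

theorem aux_sqrt (z : ℂ) : ∃ u : ℂ, ‖u‖ = 1 ∧ u ^ 2 * ‖z‖ = z := by
  rcases eq_or_ne z 0 with rfl | hz
  · exact ⟨1, by simp, by simp⟩
  · have hnz : (‖z‖ : ℂ) ≠ 0 := by
      simpa using norm_ne_zero_iff.mpr hz
    have hw : z / ‖z‖ ≠ 0 := div_ne_zero hz hnz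
    have habs : ‖z / ‖z‖‖ = 1 := by
      rw [norm_div, Complex.norm_real, norm_norm]
      exact div_self (norm_ne_zero_iff.mpr hz)
    refine ⟨Complex.exp (Complex.log (z / ‖z‖) / 2), ?_, ?_⟩
    · rw [Complex.norm_exp]
      have hre : (Complex.log (z / ‖z‖)).re = 0 := by
        rw [Complex.log_re, habs, Real.log_one]
      have h3 : Complex.log (z / ‖z‖) / 2 = ((1/2 : ℝ) : ℂ) * Complex.log (z / ‖z‖) := by
        push_cast
        ring
      rw [h3, Complex.re_ofReal_mul, hre, mul_zero, Real.exp_zero]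
    · have h2 : Complex.exp (Complex.log (z / ‖z‖) / 2) ^ 2
          = Complex.exp (Complex.log (z / ‖z‖)) := by
        rw [← Complex.exp_nat_mul]
        congr 1
        push_cast
        ring
      rw [h2, Complex.exp_log hw, div_mul_cancel₀ _ hnz]

theorem autonne_takagi (n : ℕ) (A : Matrix (Fin n) (Fin n) ℂ) (hA : Aᵀ = A) :
    ∃ U : Matrix (Fin n) (Fin n) ℂ, U ∈ Matrix.unitaryGroup (Fin n) ℂ ∧
      ∃ d : Fin n → ℝ, (∀ i, 0 ≤ d i) ∧
        A = U * Matrix.diagonal (fun i => (d i : ℂ)) * Uᵀ := by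
  classical
  have hH : (A * Aᴴ).IsHermitian := isHermitian_mul_conjTranspose_self A
  set Q : Matrix (Fin n) (Fin n) ℂ := (hH.eigenvectorUnitary : Matrix (Fin n) (Fin n) ℂ) with hQ
  have hQmem : Q ∈ Matrix.unitaryGroup (Fin n) ℂ := hH.eigenvectorUnitary.2
  have hQ1 : star Q * Q = 1 := mem_unitaryGroup_iff'.mp hQmem
  have hQ2 : Q * star Q = 1 := mem_unitaryGroup_iff.mp hQmem
  set Qb : Matrix (Fin n) (Fin n) ℂ := Q.map (starRingEnd ℂ) with hQb
  have hQbT : Qbᵀ = star Q := by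
    ext i j
    simp [hQb, Matrix.star_apply]
  have hsQT : (star Q)ᵀ = Qb := by
    ext i j
    simp [hQb, Matrix.star_apply]
  have hstarQb : star Qb = Qᵀ := by
    ext i j
    simp [hQb, Matrix.star_apply]
  have hQT : Qᵀ = (star Q).map (starRingEnd ℂ) := by
    ext i j
    simp [Matrix.star_apply]
  have hQbQT : Qb * Qᵀ = 1 := by
    rw [hQb, hQT, ← Matrix.map_mul, hQ2]
    exact Matrix.map_one _ (map_zero _) (map_one _)
  set B : Matrix (Fin n) (Fin n) ℂ := star Q * A * Qb with hB
  have hBsymm : Bᵀ = B := by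
    rw [hB, Matrix.transpose_mul, Matrix.transpose_mul, hQbT, hsQT, hA, Matrix.mul_assoc]
  have hsB : star B = Qᵀ * Aᴴ * Q := by
    rw [hB, Matrix.star_mul, Matrix.star_mul, hstarQb, star_star,
      Matrix.star_eq_conjTranspose A, ← Matrix.mul_assoc]
  have hC : B * star B = diagonal (RCLike.ofReal ∘ hH.eigenvalues) := by
    have h0 : star Q * (A * Aᴴ) * Q = diagonal (RCLike.ofReal ∘ hH.eigenvalues) := by
      have := hH.conjStarAlgAut_star_eigenvectorUnitary
      rwa [Unitary.conjStarAlgAut_star_apply] at this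
    calc B * star B = star Q * A * Qb * (Qᵀ * Aᴴ * Q) := by rw [hB, hsB]
      _ = star Q * A * (Qb * Qᵀ) * Aᴴ * Q := by noncomm_ring
      _ = star Q * (A * Aᴴ) * Q := by rw [hQbQT, mul_one]; noncomm_ring
      _ = diagonal (RCLike.ofReal ∘ hH.eigenvalues) := h0
  have hBe : ∀ i j, B j i = B i j := by
    intro i j
    conv_rhs => rw [← hBsymm]
    exact (Matrix.transpose_apply B i j).symm
  set X : Matrix (Fin n) (Fin n) ℝ := of fun i j => (B i j).re with hX
  set Y : Matrix (Fin n) (Fin n) ℝ := of fun i j => (B i j).im with hY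
  have hXe : ∀ i j, X i j = X j i := fun i j => by simp [hX, hBe i j]
  have hYe : ∀ i j, Y i j = Y j i := fun i j => by simp [hY, hBe i j]
  have hXherm : X.IsHermitian := by
    ext i j
    simp only [conjTranspose_apply, star_trivial, transpose_apply]
    exact hXe j i
  have hYherm : Y.IsHermitian := by
    ext i j
    simp only [conjTranspose_apply, star_trivial, transpose_apply]
    exact hYe j i
  have hcommXY : X * Y = Y * X := by
    ext i j
    have him : ((B * star B) i j).im = 0 := by
      rw [hC]
      rcases eq_or_ne i j with rfl | hij
      · simp [diagonal_apply_eq]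
      · simp [diagonal_apply_ne _ hij]
    have hexp : ((B * star B) i j).im
        = ∑ k, (Y i k * X j k - X i k * Y j k) := by
      rw [Matrix.mul_apply, Complex.im_sum]
      refine Finset.sum_congr rfl fun k _ => ?_
      simp only [Matrix.star_apply, Complex.mul_im, Complex.star_def, Complex.conj_re,
        Complex.conj_im, hX, hY, of_apply]
      ring
    rw [hexp] at him
    rw [Finset.sum_sub_distrib] at him
    have hsub : ∑ k, Y i k * X j k = ∑ k, X i k * Y j k := sub_eq_zero.mp him
    rw [Matrix.mul_apply, Matrix.mul_apply]
    calc ∑ k, X i k * Y k j = ∑ k, X i k * Y j k := by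
          refine Finset.sum_congr rfl fun k _ => by rw [hYe k j]
      _ = ∑ k, Y i k * X j k := hsub.symm
      _ = ∑ k, Y i k * X k j := by
          refine Finset.sum_congr rfl fun k _ => by rw [hXe j k]
  obtain ⟨O, hOmem, d₁, d₂, hd₁, hd₂⟩ := aux_simdiag X Y hXherm hYherm hcommXY
  have hO1 : star O * O = 1 := mem_unitaryGroup_iff'.mp hOmem
  have hO2 : O * star O = 1 := mem_unitaryGroup_iff.mp hOmem
  have hXdiag : X = O * diagonal d₁ * star O := by
    calc X = (O * star O) * X * (O * star O) := by rw [hO2, one_mul, mul_one]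
      _ = O * (star O * X * O) * star O := by noncomm_ring
      _ = O * diagonal d₁ * star O := by rw [hd₁]
  have hYdiag : Y = O * diagonal d₂ * star O := by
    calc Y = (O * star O) * Y * (O * star O) := by rw [hO2, one_mul, mul_one]
      _ = O * (star O * Y * O) * star O := by noncomm_ring
      _ = O * diagonal d₂ * star O := by rw [hd₂]
  -- complexify
  set Oc : Matrix (Fin n) (Fin n) ℂ := O.map Complex.ofRealHom with hOc
  set Osc : Matrix (Fin n) (Fin n) ℂ := (star O).map Complex.ofRealHom with hOsc
  have hOcT : Ocᵀ = Osc := by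
    ext i j
    simp [hOc, hOsc, Matrix.star_apply]
  have hstarOc : star Oc = Osc := by
    ext i j
    simp [hOc, hOsc, Matrix.star_apply, Complex.conj_ofReal]
  have hOcmem : Oc ∈ Matrix.unitaryGroup (Fin n) ℂ := by
    rw [mem_unitaryGroup_iff']
    rw [hstarOc, hOsc, hOc, ← Matrix.map_mul, hO1]
    exact Matrix.map_one _ (map_zero _) (map_one _)
  set z : Fin n → ℂ := fun j => (d₁ j : ℂ) + Complex.I * (d₂ j : ℂ) with hz
  have hBdec : B = Oc * diagonal z * Osc := by
    have hXc : X.map Complex.ofRealHom = Oc * diagonal (fun j => (d₁ j : ℂ)) * Osc := by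
      rw [hXdiag, Matrix.map_mul, Matrix.map_mul, ← hOc, ← hOsc]
      congr 1
      congr 1
      rw [Matrix.diagonal_map (map_zero _)]
      rfl
    have hYc : Y.map Complex.ofRealHom = Oc * diagonal (fun j => (d₂ j : ℂ)) * Osc := by
      rw [hYdiag, Matrix.map_mul, Matrix.map_mul, ← hOc, ← hOsc]
      congr 1
      congr 1
      rw [Matrix.diagonal_map (map_zero _)]
      rfl
    have hsplit : B = X.map Complex.ofRealHom + Complex.I • Y.map Complex.ofRealHom := by
      ext i j
      simp only [Matrix.add_apply, Matrix.smul_apply, Matrix.map_apply, hX, hY, of_apply,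
        Complex.ofRealHom_eq_coe, smul_eq_mul]
      rw [mul_comm]
      exact (Complex.re_add_im _).symm
    have hDz : (diagonal fun j => ((d₁ j : ℝ) : ℂ)) + Complex.I • (diagonal fun j => ((d₂ j : ℝ) : ℂ))
        = diagonal z := by
      ext i j
      rcases eq_or_ne i j with rfl | hij
      · simp [hz]
      · simp [Matrix.diagonal_apply_ne _ hij, hij]
    have hsm : Complex.I • ((Oc * diagonal fun j => ((d₂ j : ℝ) : ℂ)) * Osc)
        = (Oc * (Complex.I • diagonal fun j => ((d₂ j : ℝ) : ℂ))) * Osc := by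
      rw [Matrix.mul_smul, Matrix.smul_mul]
    rw [hsplit, hXc, hYc, hsm, ← Matrix.add_mul, ← Matrix.mul_add, hDz]
  choose u hu1 hu2 using fun j => aux_sqrt (z j)
  set d : Fin n → ℝ := fun j => ‖z j‖ with hd
  set Du : Matrix (Fin n) (Fin n) ℂ := diagonal u with hDu
  have huu : (fun i => (star u) i * u i) = fun _ => (1 : ℂ) := by
    funext j
    have h1 : ‖u j‖ = 1 := by exact hu1 j
    show star (u j) * u j = 1
    rw [Complex.star_def, mul_comm, Complex.mul_conj, Complex.normSq_eq_norm_sq, h1]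
    norm_num
  have hDumem : Du ∈ Matrix.unitaryGroup (Fin n) ℂ := by
    rw [mem_unitaryGroup_iff', hDu, Matrix.star_eq_conjTranspose, Matrix.diagonal_conjTranspose,
      diagonal_mul_diagonal, huu]
    exact Matrix.diagonal_one
  refine ⟨Q * Oc * Du, mul_mem (mul_mem hQmem hOcmem) hDumem, d, fun i => norm_nonneg _, ?_⟩
  have hDuT : Duᵀ = Du := by rw [hDu, Matrix.diagonal_transpose]
  have hUT : (Q * Oc * Du)ᵀ = Du * Osc * Qᵀ := by
    rw [Matrix.transpose_mul, Matrix.transpose_mul, hDuT, hOcT, Matrix.mul_assoc]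
  have hmid : Du * diagonal (fun i => (d i : ℂ)) * Du = diagonal z := by
    rw [hDu, diagonal_mul_diagonal, diagonal_mul_diagonal]
    ext i j
    rcases eq_or_ne i j with rfl | hij
    · rw [Matrix.diagonal_apply_eq, Matrix.diagonal_apply_eq]
      show u i * (d i : ℂ) * u i = z i
      calc u i * (d i : ℂ) * u i = u i ^ 2 * ((‖z i‖ : ℝ) : ℂ) := by rw [hd]; ring
        _ = z i := hu2 i
    · rw [Matrix.diagonal_apply_ne _ hij, Matrix.diagonal_apply_ne _ hij]
  calc A = (Q * star Q) * A * (Qb * Qᵀ) := by rw [hQ2, hQbQT, one_mul, mul_one]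
    _ = Q * (star Q * A * Qb) * Qᵀ := by noncomm_ring
    _ = Q * (Oc * diagonal z * Osc) * Qᵀ := by rw [← hB, hBdec]
    _ = Q * (Oc * (Du * diagonal (fun i => (d i : ℂ)) * Du) * Osc) * Qᵀ := by rw [hmid]
    _ = (Q * Oc * Du) * diagonal (fun i => (d i : ℂ)) * (Du * Osc * Qᵀ) := by noncomm_ring
    _ = (Q * Oc * Du) * diagonal (fun i => (d i : ℂ)) * (Q * Oc * Du)ᵀ := by rw [hUT]
end
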